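/- Let F be any formal power series in countably many variables y_1, y_2, … with coefficients in R(T), and let s_θ(F) denote the series obtained by applying to each coefficient the ring automorphism of R(T) exchanging e^{a_1} and e^{a_n}. Then the series Ω(b_1|y)·s_θ(F) − Ω(b_n|y)·F is divisible by 1 − e^{a_n − a_1} in the power series ring R(T)[[y_1, y_2, …]]. -/

import Mathlib

noncomputable section

/-- `R(T) = ℤ[e^{±a_1},…,e^{±a_n}]`, the group algebra over `ℤ` of the free abelian
group `ℤⁿ` of characters. -/
abbrev RT (n : ℕ) : Type := AddMonoidAlgebra ℤ (Fin n →₀ ℤ)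

instance (n : ℕ) : IsDomain (RT n) := NoZeroDivisors.to_isDomain _

/-- `e^λ` for a character `λ`. -/
def eexp (n : ℕ) (lam : Fin n →₀ ℤ) : RT n := AddMonoidAlgebra.single lam 1

/-- `b_i = 1 - e^{-a_i}`. -/
def bb (n : ℕ) (i : Fin n) : RT n := 1 - eexp n (-(Finsupp.single i 1))

/-- The ring automorphism of `R(T)` induced by a permutation of the variables:
`e^{a_i} ↦ e^{a_{σ(i)}}`. -/
def permRT (n : ℕ) (σ : Equiv.Perm (Fin n)) : RT n ≃ₐ[ℤ] RT n :=
  AddMonoidAlgebra.domCongr ℤ ℤ (Finsupp.domCongr (σ : Fin n ≃ Fin n))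

/-- Index set of the variables `z_{ij}`, `1 ≤ i ≤ j ≤ n`. -/
abbrev Idx (n : ℕ) : Type := {p : Fin n × Fin n // p.1 ≤ p.2}

/-- An element of `Idx n` from natural-number data. -/
def mkIdx (n : ℕ) (a b : ℕ) (ha : a < n) (hb : b < n) (hab : a ≤ b) : Idx n :=
  ⟨(⟨a, ha⟩, ⟨b, hb⟩), Fin.mk_le_mk.mpr hab⟩

/-- The defining relation `(b_i - b_j)·z_{ij} - z_{i,j-1} + z_{i+1,j}` (0-based indices). -/
def relGen (n : ℕ) (i j : ℕ) (hi : i < n) (hj : j < n) (hij : i < j) :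
    MvPolynomial (Idx n) (RT n) :=
  MvPolynomial.C (bb n ⟨i, hi⟩ - bb n ⟨j, hj⟩) * MvPolynomial.X (mkIdx n i j hi hj hij.le)
    - MvPolynomial.X (mkIdx n i (j - 1) hi (by omega) (by omega))
    + MvPolynomial.X (mkIdx n (i + 1) j (by omega) hj (by omega))

/-- The ideal of relations of the centralizer family. -/
def centIdeal (n : ℕ) : Ideal (MvPolynomial (Idx n) (RT n)) :=
  Ideal.span {f | ∃ (i j : ℕ) (hi : i < n) (hj : j < n) (hij : i < j), f = relGen n i j hi hj hij}

/-- The ring `R = R(T)[z_{ij}]/I`. -/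
abbrev centRing (n : ℕ) : Type := MvPolynomial (Idx n) (RT n) ⧸ centIdeal n

/-- The class of the generator `z_{ij}` in `R` (0-based indices). -/
def zbar (n : ℕ) (i j : ℕ) (hi : i < n) (hj : j < n) (hij : i ≤ j) : centRing n :=
  Ideal.Quotient.mk (centIdeal n) (MvPolynomial.X (mkIdx n i j hi hj hij))


/-- `Ω(b|y)`: the formal power series in `y_1, y_2, …` whose coefficient on each monomial of
total degree `d` is `b^d`, i.e. `∏_{j ≥ 1} (1 - b y_j)⁻¹`. -/
def Omg (n : ℕ) (b : RT n) : MvPowerSeries ℕ (RT n) :=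
  fun d => b ^ (d.sum fun _ k => k)

/-!
Modulo `c = 1 - e^{a_n - a_1}` the characters `e^{a_1}` and `e^{a_n}` coincide, so `s_θ` becomes
the identity and `b_1 ≡ b_n`. Hence the reduction of `Ω(b_1|y)·s_θ(F) - Ω(b_n|y)·F` modulo `c`
vanishes coefficientwise, which is divisibility by the constant series `c`.
-/

namespace MvPowerSeries

variable {σ R : Type*} [CommRing R]

theorem C_dvd_iff_map_mk_eq_zero (c : R) (f : MvPowerSeries σ R) :
    C c ∣ f ↔ map (Ideal.Quotient.mk (Ideal.span {c})) f = 0 := by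
  constructor
  · rintro ⟨g, rfl⟩
    rw [map_mul, map_C, Ideal.Quotient.eq_zero_iff_mem.mpr (Ideal.mem_span_singleton_self c),
      map_zero, zero_mul]
  · intro h
    have hdvd : ∀ d, c ∣ coeff d f := fun d => by
      rw [← Ideal.mem_span_singleton, ← Ideal.Quotient.eq_zero_iff_mem, ← coeff_map, h,
        map_zero]
    obtain ⟨g, hg⟩ : ∃ g : MvPowerSeries σ R, ∀ d, coeff d f = c * coeff d g :=
      ⟨fun d => (hdvd d).choose, fun d => (hdvd d).choose_spec⟩
    exact ⟨g, ext fun d => by rw [coeff_C_mul, hg]⟩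

end MvPowerSeries

open MvPowerSeries

theorem Finsupp.equivMapDomain_swap {α : Type*} [DecidableEq α] (i j : α) (l : α →₀ ℤ) :
    equivMapDomain (Equiv.swap i j) l = l + (l i - l j) • (single j 1 - single i 1) := by
  ext k
  rw [equivMapDomain_apply]
  rcases eq_or_ne i j with rfl | hij
  · simp
  by_cases hi : k = i
  · subst hi; simp [Equiv.swap_apply_left, hij]
  by_cases hj : k = j
  · subst hj; simp [Equiv.swap_apply_right, hij]
  simp [Equiv.swap_apply_of_ne_of_ne hi hj, Ne.symm hi, Ne.symm hj]

section RT

variable {n : ℕ} {A : Type*} [Semiring A]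

theorem eexp_add (a b : Fin n →₀ ℤ) : eexp n (a + b) = eexp n a * eexp n b := by
  simp [eexp, AddMonoidAlgebra.single_mul_single]

theorem eexp_zsmul_eq_one (f : RT n →+* A) {μ : Fin n →₀ ℤ} (hμ : f (eexp n μ) = 1) (k : ℤ) :
    f (eexp n (k • μ)) = 1 := by
  induction k using Int.induction_on with
  | zero => simp [eexp, ← AddMonoidAlgebra.one_def]
  | succ k ih => rw [add_smul, one_smul, eexp_add, map_mul, ih, hμ, one_mul]
  | pred k ih =>
    rwa [← sub_add_cancel (-(k : ℤ)) 1, add_smul, one_smul, eexp_add, map_mul, hμ, mul_one] at ih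

theorem permRT_eexp (σ : Equiv.Perm (Fin n)) (l : Fin n →₀ ℤ) :
    permRT n σ (eexp n l) = eexp n (Finsupp.equivMapDomain σ l) := by
  simp [permRT, eexp]

theorem permRT_swap_bb (i j : Fin n) : permRT n (Equiv.swap i j) (bb n j) = bb n i := by
  rw [bb, bb, map_sub, map_one, permRT_eexp, ← Finsupp.single_neg, Finsupp.equivMapDomain_single,
    Equiv.swap_apply_right, Finsupp.single_neg]

theorem comp_permRT_swap_of_eexp_eq_one (f : RT n →+* A) (i j : Fin n)
    (h : f (eexp n (Finsupp.single j 1 - Finsupp.single i 1)) = 1) :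
    f.comp (permRT n (Equiv.swap i j)).toRingEquiv.toRingHom = f := by
  refine AddMonoidAlgebra.ringHom_ext (fun r => by simp [permRT]) (fun l => ?_)
  change f (permRT n _ (eexp n l)) = f (eexp n l)
  rw [permRT_eexp, Finsupp.equivMapDomain_swap, eexp_add, map_mul, eexp_zsmul_eq_one f h, mul_one]

theorem coeff_Omg (b : RT n) (d : ℕ →₀ ℕ) : coeff d (Omg n b) = b ^ (d.sum fun _ k => k) :=
  rfl

theorem map_Omg_eq_of_map_eq (f : RT n →+* A) {b b' : RT n}
    (h : f b = f b') : map f (Omg n b) = map f (Omg n b') := by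
  ext d
  rw [coeff_map, coeff_map, coeff_Omg, coeff_Omg, map_pow, map_pow, h]

end RT

/-- for any power series `F`, the series
`Ω(b_1|y)·s_θ(F) - Ω(b_n|y)·F` is divisible by `1 - e^{a_n - a_1}` in `R(T)[[y_1, y_2, …]]`,
where `s_θ` acts on coefficients by exchanging `e^{a_1}` and `e^{a_n}`. -/
theorem stmt13 (n : ℕ) (hn : 2 ≤ n) (F : MvPowerSeries ℕ (RT n)) :
    ∃ G : MvPowerSeries ℕ (RT n),
      Omg n (bb n ⟨0, by omega⟩)
          * MvPowerSeries.map
              ((permRT n (Equiv.swap ⟨0, by omega⟩ ⟨n - 1, by omega⟩)).toRingEquiv.toRingHom) F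
        - Omg n (bb n ⟨n - 1, by omega⟩) * F
      = MvPowerSeries.C
          (1 - eexp n (Finsupp.single ⟨n - 1, by omega⟩ 1 - Finsupp.single ⟨0, by omega⟩ 1))
          * G := by
  set i : Fin n := ⟨0, by omega⟩
  set j : Fin n := ⟨n - 1, by omega⟩
  set c := 1 - eexp n (Finsupp.single j 1 - Finsupp.single i 1)
  set π := Ideal.Quotient.mk (Ideal.span {c})
  have hc : π (eexp n (Finsupp.single j 1 - Finsupp.single i 1)) = 1 :=
    ((Ideal.Quotient.mk_eq_mk_iff_sub_mem _ _).mpr (Ideal.mem_span_singleton_self c)).symm.trans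
      (map_one π)
  have hθ := comp_permRT_swap_of_eexp_eq_one π i j hc
  have hb : π (bb n i) = π (bb n j) := by
    rw [← permRT_swap_bb i j]
    exact RingHom.congr_fun hθ (bb n j)
  rw [← dvd_def, C_dvd_iff_map_mk_eq_zero, map_sub, map_mul, map_mul, map_map, hθ,
    map_Omg_eq_of_map_eq π hb, sub_self]
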